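/- Let Q(ℓ,w), 0 ≤ w ≤ ℓ, be a family of row-stochastic real 𝒥×𝒥 matrices with nonnegative entries and Π the matrices produced by the recursion from Q. Then for every γ > 0, every s > 0 and every i ∈ 𝒥, the approximate transition probabilities have total mass one: Σ_{j∈𝒥} p^a_{ij}(s) + ∫_0^s Σ_{j∈𝒥} p^c_{ij}(s,v) dv = 1. -/

import Mathlib

open scoped BigOperators

noncomputable section

/-- The diagonal part of a matrix. -/
def diagPart {J : Type*} [DecidableEq J] (M : Matrix J J ℝ) : Matrix J J ℝ :=
  Matrix.of fun i j => if i = j then M i j else 0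

/-- The off-diagonal part of a matrix. -/
def offdiagPart {J : Type*} [DecidableEq J] (M : Matrix J J ℝ) : Matrix J J ℝ :=
  M - diagPart M

/-- A matrix is row-substochastic if its entries are nonnegative and every row sum is ≤ 1. -/
def RowSubstochastic {J : Type*} [Fintype J] (M : Matrix J J ℝ) : Prop :=
  (∀ i j, 0 ≤ M i j) ∧ ∀ i, ∑ j, M i j ≤ 1

/-- A matrix is row-stochastic if its entries are nonnegative and every row sum equals 1. -/
def RowStochastic {J : Type*} [Fintype J] (M : Matrix J J ℝ) : Prop :=
  (∀ i j, 0 ≤ M i j) ∧ ∀ i, ∑ j, M i j = 1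

/-- The matrices `Π(k,v)` produced by the recursion from the family `Q(ℓ,w)`:
`Π(0,0) = I`, `Π(k,v) = 0` for `v > k`,
`Π(k,0) = ∑_{k'=0}^{k-1} Π(k-1,k') Qⁿ(k-1,k')` for `k ≥ 1`, and
`Π(k,v) = Π(k-1,v-1) Q^d(k-1,v-1)` for `k ≥ v ≥ 1`. -/
def PiRec {J : Type*} [Fintype J] [DecidableEq J]
    (Q : ℕ → ℕ → Matrix J J ℝ) : ℕ → ℕ → Matrix J J ℝ
  | 0, v => if v = 0 then 1 else 0
  | (k+1), v =>
      if v = 0 then ∑ k' ∈ Finset.range (k+1), PiRec Q k k' * offdiagPart (Q k k')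
      else if v ≤ k + 1 then PiRec Q k (v-1) * diagPart (Q k (v-1)) else 0

/-- `C_k`: `C_0 = 0` and, for `k ≥ 1`,
`C_k = sup { ∑_j |Q_{ij}(ℓ,w) − Q̃_{ij}(ℓ,w)| : 0 ≤ w ≤ ℓ ≤ k−1, i ∈ 𝒥 }`. -/
def Cconst {J : Type*} [Fintype J] (Q Q' : ℕ → ℕ → Matrix J J ℝ) (k : ℕ) : ℝ :=
  sSup {x : ℝ | ∃ ℓ w, ∃ i : J, w ≤ ℓ ∧ ℓ < k ∧ x = ∑ j, |Q ℓ w i j - Q' ℓ w i j|}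

/-- `Poi_λ(k) = e^{−λ} λ^k / k!`. -/
def Poi (lam : ℝ) (k : ℕ) : ℝ := Real.exp (-lam) * lam ^ k / (Nat.factorial k)

/-- `Erl_{k,γ}(x) = γ (γx)^{k−1} e^{−γx} / (k−1)!` (intended for `k ≥ 1`). -/
def Erl (k : ℕ) (γ x : ℝ) : ℝ :=
  γ * (γ * x) ^ (k - 1) * Real.exp (-(γ * x)) / (Nat.factorial (k - 1))

/-- Atomic part of the approximate transition probabilities:
`p^a_{ij}(s) = 1_{i=j} ∑_{ℓ≥0} Poi_{γs}(ℓ) Π_{ii}(ℓ,ℓ)`. -/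
def pAtom {J : Type*} [Fintype J] [DecidableEq J] (γ : ℝ)
    (Pi : ℕ → ℕ → Matrix J J ℝ) (s : ℝ) (i j : J) : ℝ :=
  (if i = j then 1 else 0) * ∑' ℓ : ℕ, Poi (γ * s) ℓ * Pi ℓ ℓ i i

/-- Absolutely continuous part of the approximate transition probabilities:
`p^c_{ij}(s,v) = ∑_{ℓ≥1} ∑_{w=0}^{ℓ−1} Erl_{ℓ−w,γ}(s−v) Poi_{γv}(w) Π_{ij}(ℓ,w)`. -/
def pCont {J : Type*} [Fintype J] (γ : ℝ)
    (Pi : ℕ → ℕ → Matrix J J ℝ) (s v : ℝ) (i j : J) : ℝ :=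
  ∑' ℓ : ℕ, ∑ w ∈ Finset.range ℓ, Erl (ℓ - w) γ (s - v) * Poi (γ * v) w * Pi ℓ w i j

/-!
For each `ℓ`, row `i` of the stacked family `Π(ℓ,0), …, Π(ℓ,ℓ)` is a probability vector: the
mass of `Π(ℓ,w)` sent through the off-diagonal part of `Q(ℓ,w)` lands in `Π(ℓ+1,0)`, the rest in
`Π(ℓ+1,w+1)`. Integrating out `v`, the Erlang–Poisson weight `Erl_{ℓ-w,γ}(s-v) Poi_{γv}(w)`
becomes the beta integral `Poi_{γs}(ℓ)`, whatever `w < ℓ` is, while the atom gives `Π(ℓ,ℓ)`, a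
diagonal matrix, the same weight. The total mass is therefore `∑_ℓ Poi_{γs}(ℓ) = 1`. Exchanging
`∑_ℓ` with `∫ dv` is dominated convergence, with the bound `γ Poi_{γs}(ℓ-1)` coming from the
Poisson–Erlang convolution `∑_{w<ℓ} Erl_{ℓ-w,γ}(s-v) Poi_{γv}(w) = γ Poi_{γs}(ℓ-1)`.
-/

open Finset

section Matrix

variable {J : Type*}

lemma diagPart_apply [DecidableEq J] (M : Matrix J J ℝ) (i j : J) :
    diagPart M i j = if i = j then M i j else 0 := rfl

variable [Fintype J]

lemma Matrix.sum_mul_apply (A B : Matrix J J ℝ) (i : J) :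
    ∑ j, (A * B) i j = ∑ m, A i m * ∑ j, B m j := by
  simp only [Matrix.mul_apply, mul_sum]
  exact sum_comm

lemma RowSubstochastic.apply_le_one {M : Matrix J J ℝ} (hM : RowSubstochastic M) (i j : J) :
    M i j ≤ 1 :=
  (single_le_sum (fun j _ => hM.1 i j) (mem_univ j)).trans (hM.2 i)

variable [DecidableEq J]

lemma sum_diagPart_apply (M : Matrix J J ℝ) (i : J) : ∑ j, diagPart M i j = M i i := by
  simp [diagPart_apply]

lemma sum_offdiagPart_apply (M : Matrix J J ℝ) (i : J) :
    ∑ j, offdiagPart M i j = ∑ j, M i j - M i i := by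
  simp [offdiagPart, sum_sub_distrib, sum_diagPart_apply]

end Matrix

section PiRec

variable {J : Type*} [Fintype J] [DecidableEq J] (Q : ℕ → ℕ → Matrix J J ℝ)

lemma PiRec_succ_zero (k : ℕ) :
    PiRec Q (k + 1) 0 = ∑ k' ∈ range (k + 1), PiRec Q k k' * offdiagPart (Q k k') := by
  rw [PiRec, if_pos rfl]

lemma PiRec_succ_succ {k v : ℕ} (hv : v ≤ k) :
    PiRec Q (k + 1) (v + 1) = PiRec Q k v * diagPart (Q k v) := by
  simp [PiRec, hv]

lemma PiRec_of_lt {k v : ℕ} (h : k < v) : PiRec Q k v = 0 := by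
  cases k with
  | zero => simp [PiRec, h.ne']
  | succ k => simp [PiRec, show v ≠ 0 by omega, h.not_ge]

lemma PiRec_self_apply_of_ne (ℓ : ℕ) {i j : J} (hij : i ≠ j) : PiRec Q ℓ ℓ i j = 0 := by
  induction ℓ generalizing j with
  | zero => simp [PiRec, hij]
  | succ ℓ ih =>
    rw [PiRec_succ_succ Q le_rfl, Matrix.mul_apply]
    refine sum_eq_zero fun m _ => ?_
    by_cases hmj : m = j
    · simp [hmj, ih hij]
    · simp [diagPart_apply, hmj]

lemma PiRec_nonneg (hQ : ∀ ℓ w, w ≤ ℓ → ∀ i j, 0 ≤ Q ℓ w i j) (k v : ℕ) (i j : J) :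
    0 ≤ PiRec Q k v i j := by
  induction k generalizing v i j with
  | zero => by_cases hv : v = 0 <;> simp [PiRec, hv, Matrix.one_apply, apply_ite]
  | succ k ih =>
    rcases v with _ | v
    · rw [PiRec_succ_zero, Matrix.sum_apply]
      refine sum_nonneg fun k' hk' => sum_nonneg fun m _ => mul_nonneg (ih _ _ _) ?_
      by_cases hmj : m = j
      · simp [offdiagPart, diagPart_apply, hmj]
      · simpa [offdiagPart, diagPart_apply, hmj] using hQ k k' (mem_range_succ_iff.mp hk') m j
    · by_cases hv : v ≤ k
      · rw [PiRec_succ_succ Q hv, Matrix.mul_apply]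
        refine sum_nonneg fun m _ => mul_nonneg (ih _ _ _) ?_
        by_cases hmj : m = j
        · simpa [diagPart_apply, hmj] using hQ k v hv m m
        · simp [diagPart_apply, hmj]
      · simp [PiRec_of_lt Q (show k + 1 < v + 1 by omega)]

lemma sum_range_sum_PiRec (hQ : ∀ ℓ w, w ≤ ℓ → ∀ i, ∑ j, Q ℓ w i j = 1) (k : ℕ) (i : J) :
    ∑ v ∈ range (k + 1), ∑ j, PiRec Q k v i j = 1 := by
  induction k generalizing i with
  | zero => simp [PiRec, Matrix.one_apply]
  | succ k ih =>
    have h_zero : ∑ j, PiRec Q (k + 1) 0 i j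
        = ∑ v ∈ range (k + 1), ∑ m, PiRec Q k v i m * (1 - Q k v m m) := by
      rw [PiRec_succ_zero]
      simp only [Matrix.sum_apply]
      rw [sum_comm]
      refine sum_congr rfl fun v hv => ?_
      rw [Matrix.sum_mul_apply]
      simp only [sum_offdiagPart_apply, hQ k v (mem_range_succ_iff.mp hv)]
    have h_succ : ∀ v ∈ range (k + 1),
        ∑ j, PiRec Q (k + 1) (v + 1) i j = ∑ m, PiRec Q k v i m * Q k v m m := by
      intro v hv
      rw [PiRec_succ_succ Q (mem_range_succ_iff.mp hv), Matrix.sum_mul_apply]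
      simp only [sum_diagPart_apply]
    rw [sum_range_succ', sum_congr rfl h_succ, h_zero, ← sum_add_distrib]
    refine (sum_congr rfl fun v _ => ?_).trans (ih i)
    rw [← sum_add_distrib]
    exact sum_congr rfl fun m _ => by ring

lemma rowSubstochastic_PiRec (hQ : ∀ ℓ w, w ≤ ℓ → RowStochastic (Q ℓ w)) (k v : ℕ) :
    RowSubstochastic (PiRec Q k v) := by
  have h_nonneg := PiRec_nonneg Q fun ℓ w h => (hQ ℓ w h).1
  refine ⟨h_nonneg k v, fun i => ?_⟩
  rcases le_or_gt v k with hv | hv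
  · rw [← sum_range_sum_PiRec Q (fun ℓ w h => (hQ ℓ w h).2) k i]
    exact single_le_sum (f := fun v => ∑ j, PiRec Q k v i j)
      (fun v _ => sum_nonneg fun j _ => h_nonneg k v i j) (mem_range_succ_iff.mpr hv)
  · simp [PiRec_of_lt Q hv]

lemma PiRec_self_apply_add_sum_range (hQ : ∀ ℓ w, w ≤ ℓ → ∀ i, ∑ j, Q ℓ w i j = 1)
    (ℓ : ℕ) (i : J) :
    PiRec Q ℓ ℓ i i + ∑ w ∈ range ℓ, ∑ j, PiRec Q ℓ w i j = 1 := by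
  rw [← sum_range_sum_PiRec Q hQ ℓ i, sum_range_succ, add_comm,
    sum_eq_single i (fun j _ hj => PiRec_self_apply_of_ne Q ℓ (Ne.symm hj)) (by simp)]

end PiRec

section PoissonErlang

open Nat

lemma Poi_nonneg {lam : ℝ} (h : 0 ≤ lam) (k : ℕ) : 0 ≤ Poi lam k := by
  unfold Poi; positivity

lemma Erl_nonneg {γ x : ℝ} (hγ : 0 ≤ γ) (hx : 0 ≤ x) (k : ℕ) : 0 ≤ Erl k γ x := by
  unfold Erl; positivity

lemma hasSum_Poi (lam : ℝ) : HasSum (Poi lam) 1 := by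
  have h := (NormedSpace.expSeries_div_hasSum_exp lam).mul_left (Real.exp (-lam))
  have h_Poi : (fun k => Real.exp (-lam) * (lam ^ k / k !)) = Poi lam := by
    ext k
    rw [Poi, mul_div_assoc]
  rwa [← Real.exp_eq_exp_ℝ, ← Real.exp_add, neg_add_cancel, Real.exp_zero, h_Poi] at h

lemma summable_Poi_sub_one (lam : ℝ) : Summable fun ℓ => Poi lam (ℓ - 1) :=
  (summable_nat_add_iff 1).mp (by simpa using (hasSum_Poi lam).summable)

lemma sum_range_pow_div_factorial_mul (x y : ℝ) (n : ℕ) :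
    ∑ w ∈ range (n + 1), x ^ (n - w) / (n - w)! * (y ^ w / w !) = (x + y) ^ n / n ! := by
  rw [add_comm x y, add_pow, sum_div]
  refine sum_congr rfl fun w hw => ?_
  rw [Nat.cast_choose ℝ (mem_range_succ_iff.mp hw)]
  field_simp

lemma sum_range_Erl_mul_Poi (γ u v : ℝ) (n : ℕ) :
    ∑ w ∈ range (n + 1), Erl (n + 1 - w) γ u * Poi (γ * v) w = γ * Poi (γ * (u + v)) n := by
  have h_term : ∀ w ∈ range (n + 1), Erl (n + 1 - w) γ u * Poi (γ * v) w
      = γ * Real.exp (-(γ * (u + v))) * ((γ * u) ^ (n - w) / (n - w)! * ((γ * v) ^ w / w !)) := by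
    intro w hw
    simp only [Erl, Poi, show n + 1 - w - 1 = n - w by omega]
    rw [mul_add, neg_add, Real.exp_add]
    ring
  rw [sum_congr rfl h_term, ← mul_sum, sum_range_pow_div_factorial_mul, Poi, ← mul_add]
  ring

lemma integral_sub_pow_div_factorial_mul_pow_div_factorial (s : ℝ) (a b : ℕ) :
    ∫ v in (0 : ℝ)..s, (s - v) ^ a / a ! * (v ^ b / b !) = s ^ (a + b + 1) / (a + b + 1)! := by
  induction a generalizing b with
  | zero =>
    simp [intervalIntegral.integral_div, factorial_succ]
    field_simp
  | succ a ih =>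
    have h_sub : ∀ x ∈ Set.uIcc 0 s,
        HasDerivAt (fun v => (s - v) ^ (a + 1) / (a + 1)!) (-((s - x) ^ a / a !)) x := by
      intro x _
      refine (((hasDerivAt_pow (a + 1) (s - x)).comp x
        ((hasDerivAt_id x).const_sub s)).div_const ((a + 1)! : ℝ)).congr_deriv ?_
      push_cast [factorial_succ, add_tsub_cancel_right]
      field_simp
    have h_pow : ∀ x ∈ Set.uIcc 0 s,
        HasDerivAt (fun v : ℝ => v ^ (b + 1) / (b + 1)!) (x ^ b / b !) x := by
      intro x _
      refine ((hasDerivAt_pow (b + 1) x).div_const ((b + 1)! : ℝ)).congr_deriv ?_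
      push_cast [factorial_succ, add_tsub_cancel_right]
      field_simp
    rw [intervalIntegral.integral_mul_deriv_eq_deriv_mul h_sub h_pow
      (Continuous.intervalIntegrable (by fun_prop) _ _)
      (Continuous.intervalIntegrable (by fun_prop) _ _)]
    simp only [neg_mul, intervalIntegral.integral_neg, ih (b + 1), sub_self, sub_zero,
      zero_pow (succ_ne_zero _), zero_div, zero_mul, mul_zero, sub_neg_eq_add, zero_add]
    rw [show a + 1 + b + 1 = a + (b + 1) + 1 by omega]

lemma integral_Erl_mul_Poi (γ s : ℝ) (k w : ℕ) :
    ∫ v in (0 : ℝ)..s, Erl (k + 1) γ (s - v) * Poi (γ * v) w = Poi (γ * s) (k + 1 + w) := by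
  have h_term : ∀ v, Erl (k + 1) γ (s - v) * Poi (γ * v) w
      = γ ^ (k + 1 + w) * Real.exp (-(γ * s)) * ((s - v) ^ k / k ! * (v ^ w / w !)) := by
    intro v
    simp only [Erl, Poi, add_tsub_cancel_right, mul_pow]
    rw [show γ * s = γ * (s - v) + γ * v by ring, neg_add, Real.exp_add]
    ring
  rw [intervalIntegral.integral_congr fun v _ => h_term v, intervalIntegral.integral_const_mul,
    integral_sub_pow_div_factorial_mul_pow_div_factorial, Poi, mul_pow,
    show k + w + 1 = k + 1 + w by omega]
  ring

end PoissonErlang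

section ApproximateTransitionProbabilities

variable {J : Type*} [Fintype J] {Pi : ℕ → ℕ → Matrix J J ℝ} {γ s : ℝ}

lemma abs_sum_range_Erl_mul_Poi_mul_le {c : ℕ → ℝ} (hc : ∀ w, |c w| ≤ 1) {u v : ℝ}
    (hγ : 0 ≤ γ) (hu : 0 ≤ u) (hv : 0 ≤ v) (ℓ : ℕ) :
    |∑ w ∈ range ℓ, Erl (ℓ - w) γ u * Poi (γ * v) w * c w| ≤ γ * Poi (γ * (u + v)) (ℓ - 1) := by
  have h_kernel : ∀ w, 0 ≤ Erl (ℓ - w) γ u * Poi (γ * v) w :=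
    fun w => mul_nonneg (Erl_nonneg hγ hu _) (Poi_nonneg (mul_nonneg hγ hv) w)
  calc |∑ w ∈ range ℓ, Erl (ℓ - w) γ u * Poi (γ * v) w * c w|
      ≤ ∑ w ∈ range ℓ, Erl (ℓ - w) γ u * Poi (γ * v) w := by
        refine (abs_sum_le_sum_abs _ _).trans (sum_le_sum fun w _ => ?_)
        rw [abs_mul, abs_of_nonneg (h_kernel w)]
        exact mul_le_of_le_one_right (h_kernel w) (hc w)
    _ ≤ γ * Poi (γ * (u + v)) (ℓ - 1) := by
      rcases ℓ with _ | ℓ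
      · simpa using mul_nonneg hγ (Poi_nonneg (by positivity) 0)
      · exact (sum_range_Erl_mul_Poi γ u v ℓ).le

lemma hasSum_pCont (hγ : 0 ≤ γ) {v : ℝ} (hv : 0 ≤ v) (hvs : v ≤ s)
    (hPi : ∀ ℓ w, RowSubstochastic (Pi ℓ w)) (i j : J) :
    HasSum (fun ℓ => ∑ w ∈ range ℓ, Erl (ℓ - w) γ (s - v) * Poi (γ * v) w * Pi ℓ w i j)
      (pCont γ Pi s v i j) := by
  refine Summable.hasSum (Summable.of_norm_bounded ((summable_Poi_sub_one (γ * s)).mul_left γ)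
    fun ℓ => ?_)
  have h_entry : ∀ w, |Pi ℓ w i j| ≤ 1 := fun w =>
    abs_le.mpr ⟨by linarith [(hPi ℓ w).1 i j], (hPi ℓ w).apply_le_one i j⟩
  simpa using abs_sum_range_Erl_mul_Poi_mul_le h_entry hγ (sub_nonneg.mpr hvs) hv ℓ

lemma hasSum_integral_sum_pCont (hγ : 0 ≤ γ) (hs : 0 ≤ s)
    (hPi : ∀ ℓ w, RowSubstochastic (Pi ℓ w)) (i : J) :
    HasSum (fun ℓ => Poi (γ * s) ℓ * ∑ w ∈ range ℓ, ∑ j, Pi ℓ w i j)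
      (∫ v in (0 : ℝ)..s, ∑ j, pCont γ Pi s v i j) := by
  set F : ℕ → ℝ → ℝ := fun ℓ v =>
    ∑ w ∈ range ℓ, Erl (ℓ - w) γ (s - v) * Poi (γ * v) w * ∑ j, Pi ℓ w i j
  have h_integral : ∀ ℓ,
      ∫ v in (0 : ℝ)..s, F ℓ v = Poi (γ * s) ℓ * ∑ w ∈ range ℓ, ∑ j, Pi ℓ w i j := by
    intro ℓ
    rw [intervalIntegral.integral_finsetSum fun w _ =>
      (Continuous.intervalIntegrable (by unfold Erl Poi; fun_prop) _ _), mul_sum]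
    refine sum_congr rfl fun w hw => ?_
    obtain ⟨k, rfl⟩ : ∃ k, ℓ = w + k + 1 := ⟨ℓ - w - 1, by grind⟩
    rw [intervalIntegral.integral_mul_const, show w + k + 1 - w = k + 1 by omega,
      integral_Erl_mul_Poi, show k + 1 + w = w + k + 1 by omega]
  simp_rw [← h_integral]
  have h_mem : ∀ v ∈ Set.uIoc 0 s, 0 ≤ v ∧ v ≤ s := fun v hv => by
    rw [Set.uIoc_of_le hs] at hv; exact ⟨hv.1.le, hv.2⟩
  refine intervalIntegral.hasSum_integral_of_dominated_convergence
    (fun ℓ _ => γ * Poi (γ * s) (ℓ - 1)) (fun ℓ => ?_) (fun ℓ => ?_)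
    (.of_forall fun _ _ => (summable_Poi_sub_one _).mul_left γ) intervalIntegrable_const
    (.of_forall fun v hv => ?_)
  · exact (Continuous.aestronglyMeasurable (by simp only [F, Erl, Poi]; fun_prop))
  · refine .of_forall fun v hv => ?_
    have h_row : ∀ w, |∑ j, Pi ℓ w i j| ≤ 1 := fun w =>
      abs_le.mpr ⟨by linarith [sum_nonneg fun j (_ : j ∈ univ) => (hPi ℓ w).1 i j], (hPi ℓ w).2 i⟩
    simpa using abs_sum_range_Erl_mul_Poi_mul_le h_row hγ (sub_nonneg.mpr (h_mem v hv).2)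
      (h_mem v hv).1 ℓ
  · have h_swap : (fun ℓ => F ℓ v) = fun ℓ =>
        ∑ j, ∑ w ∈ range ℓ, Erl (ℓ - w) γ (s - v) * Poi (γ * v) w * Pi ℓ w i j := by
      ext ℓ
      simp only [F, mul_sum]
      exact sum_comm
    rw [h_swap]
    exact hasSum_sum fun j _ => hasSum_pCont hγ (h_mem v hv).1 (h_mem v hv).2 hPi i j

variable [DecidableEq J]

lemma hasSum_sum_pAtom (hγ : 0 ≤ γ) (hs : 0 ≤ s) (hPi : ∀ ℓ, RowSubstochastic (Pi ℓ ℓ)) (i : J) :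
    HasSum (fun ℓ => Poi (γ * s) ℓ * Pi ℓ ℓ i i) (∑ j, pAtom γ Pi s i j) := by
  have h_poi := Poi_nonneg (mul_nonneg hγ hs)
  simp only [pAtom, ite_mul, one_mul, zero_mul, sum_ite_eq, mem_univ, if_true]
  exact (Summable.of_nonneg_of_le (fun ℓ => mul_nonneg (h_poi ℓ) ((hPi ℓ).1 i i))
    (fun ℓ => mul_le_of_le_one_right (h_poi ℓ) ((hPi ℓ).apply_le_one i i))
    (hasSum_Poi _).summable).hasSum

end ApproximateTransitionProbabilities

theorem approximate_transition_probabilities_total_mass_one_general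
    {J : Type*} [Fintype J] [DecidableEq J]
    (Q : ℕ → ℕ → Matrix J J ℝ)
    (hQ : ∀ ℓ w, w ≤ ℓ → RowStochastic (Q ℓ w))
    (γ : ℝ) (hγ : 0 < γ) (s : ℝ) (hs : 0 < s) (i : J) :
    (∑ j, pAtom γ (PiRec Q) s i j) +
      (∫ v in (0:ℝ)..s, ∑ j, pCont γ (PiRec Q) s v i j) = 1 := by
  have hPi := rowSubstochastic_PiRec Q hQ
  have h_total := (hasSum_sum_pAtom hγ.le hs.le (fun ℓ => hPi ℓ ℓ) i).add
    (hasSum_integral_sum_pCont hγ.le hs.le hPi i)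
  refine h_total.unique ?_
  convert hasSum_Poi (γ * s) using 1
  ext ℓ
  rw [← mul_add, PiRec_self_apply_add_sum_range Q (fun ℓ w h => (hQ ℓ w h).2) ℓ i, mul_one]

theorem approximate_transition_probabilities_total_mass_one
    {J : Type*} [Fintype J] [DecidableEq J] [Nonempty J]
    (Q : ℕ → ℕ → Matrix J J ℝ)
    (hQ : ∀ ℓ w, w ≤ ℓ → RowStochastic (Q ℓ w))
    (γ : ℝ) (hγ : 0 < γ) (s : ℝ) (hs : 0 < s) (i : J) :
    (∑ j, pAtom γ (PiRec Q) s i j) +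
      (∫ v in (0:ℝ)..s, ∑ j, pCont γ (PiRec Q) s v i j) = 1 :=
  approximate_transition_probabilities_total_mass_one_general Q hQ γ hγ s hs i
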